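/- arXiv:1707.05441 — 2 statements merged into one kernel-verified Lean document; each statement's English description precedes it below -/
import Mathlib

section
/- There exists a linearly ordered pointed residuated po-monoid (M, ≤, ⊙, t, →, ⇝) with least element ⊥ and greatest element ⊤, together with elements a, b, c, d of M, such that it is not the case that t ≤ max b (((d→b) ⊙ c ⊙ (c→d) ⊙ a) → a). (Algebraic form of the paper's Lemma 2.4: the formula B ∨ ((D→B)⊙C⊙(C→D)⊙A → A) is not valid in all linearly ordered HpsUL-algebras, hence not a theorem of HpsUL.) -/
/-!
The counterexample is a six-element chain `0 < 1 < 2 < 3 < 4 < 5` with unit `t = 3`, on which `⊙`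
is not commutative: `2 ⊙ 5 = 5` but `5 ⊙ 2 = 2`. Take `a = t`, `b = c = 2`, `d = 5`. Then
`d → b = 2`, `c → d = 5`, so `(d → b) ⊙ c ⊙ (c → d) ⊙ a = 2 ⊙ 2 ⊙ 5 ⊙ 3 = 5`, and
`5 → 3 = 2`; hence the formula evaluates to `max 2 2 = 2 < t`.
-/

def witnessMul : Fin 6 → Fin 6 → Fin 6 :=
  ![![0, 0, 0, 0, 0, 0], ![0, 0, 1, 1, 1, 1], ![0, 1, 2, 2, 2, 5],
    ![0, 1, 2, 3, 4, 5], ![0, 1, 2, 4, 4, 5], ![0, 1, 2, 5, 5, 5]]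

def witnessImp : Fin 6 → Fin 6 → Fin 6 :=
  ![![5, 5, 5, 5, 5, 5], ![1, 5, 5, 5, 5, 5], ![0, 1, 4, 4, 4, 5],
    ![0, 1, 2, 3, 4, 5], ![0, 1, 2, 2, 4, 5], ![0, 1, 2, 2, 2, 5]]

def witnessLimp : Fin 6 → Fin 6 → Fin 6 :=
  ![![5, 5, 5, 5, 5, 5], ![1, 5, 5, 5, 5, 5], ![0, 1, 5, 5, 5, 5],
    ![0, 1, 2, 3, 4, 5], ![0, 1, 2, 2, 4, 5], ![0, 1, 1, 1, 1, 5]]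

theorem witnessMul_assoc (x y z : Fin 6) :
    witnessMul (witnessMul x y) z = witnessMul x (witnessMul y z) := by
  revert x y z; decide

theorem witnessMul_three_left (x : Fin 6) : witnessMul 3 x = x := by
  revert x; decide

theorem witnessMul_three_right (x : Fin 6) : witnessMul x 3 = x := by
  revert x; decide

theorem witnessMul_le_iff_le_witnessImp (x y z : Fin 6) :
    witnessMul x y ≤ z ↔ y ≤ witnessImp x z := by
  revert x y z; decide

theorem witnessMul_le_iff_le_witnessLimp (x y z : Fin 6) :
    witnessMul x y ≤ z ↔ x ≤ witnessLimp y z := by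
  revert x y z; decide

theorem witness_formula_lt_three :
    max 2 (witnessImp (witnessMul (witnessMul (witnessMul (witnessImp 5 2) 2)
      (witnessImp 2 5)) 3) 3) < (3 : Fin 6) := by
  decide

theorem lemma_2_4_algebraic :
    ∃ (M : Type) (_ : LinearOrder M) (odot : M → M → M) (t : M)
      (imp limp : M → M → M) (bot top : M),
      (∀ x, bot ≤ x) ∧ (∀ x, x ≤ top) ∧
      (∀ x y z, odot (odot x y) z = odot x (odot y z)) ∧
      (∀ x, odot t x = x) ∧ (∀ x, odot x t = x) ∧
      (∀ x y z, odot x y ≤ z ↔ y ≤ imp x z) ∧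
      (∀ x y z, odot x y ≤ z ↔ x ≤ limp y z) ∧
      ∃ a b c d : M,
        ¬ t ≤ max b (imp (odot (odot (odot (imp d b) c) (imp c d)) a) a) :=
  ⟨Fin 6, inferInstance, witnessMul, 3, witnessImp, witnessLimp, 0, 5, Fin.zero_le,
    Fin.le_last, witnessMul_assoc, witnessMul_three_left, witnessMul_three_right,
    witnessMul_le_iff_le_witnessImp, witnessMul_le_iff_le_witnessLimp, 3, 2, 2, 5,
    not_le_of_gt witness_formula_lt_three⟩
end

section
/- There exists a linearly ordered pointed residuated po-monoid (M, ≤, ⊙, t, →, ⇝) with least element ⊥ and greatest element ⊤, and an element a of M, such that it is not the case that t ≤ (a ⇝ t) → (a → t). (That is, there is a linearly ordered HpsUL-algebra that is not an HpsUL*-algebra: the weak commutativity axiom (WCM) is not derivable in HpsUL.) -/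
/-!
In a residuated monoid `t ≤ x → y` holds exactly when `x ≤ y`, so (WCM) at `a` says
`a ⇝ t ≤ a → t`. It therefore fails once the right residual of `t` at `a` lies strictly below the
left one, which needs a noncommutative product. The witness is the chain `0 < 1 < 2 < 3` with `0`
absorbing, `2` the unit and `x ⊙ y = x` for `x, y ∈ {1, 3}`. Its residuals exist because on a
finite chain a product that is monotone in one argument and sends `⊥` to `⊥` is residuated in that
argument, the residual being a finite supremum.
-/

theorem unit_le_imp_iff {M : Type*} [LE M] {odot imp : M → M → M} {t : M}
    (mul_unit : ∀ x, odot x t = x) (residuated : ∀ x y z, odot x y ≤ z ↔ y ≤ imp x z)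
    (x y : M) : t ≤ imp x y ↔ x ≤ y := by
  rw [← residuated, mul_unit]

section Residual

variable {M : Type*} [LinearOrder M] [OrderBot M] [Fintype M]

def rightResidual (f : M → M → M) (x z : M) : M :=
  (Finset.univ.filter fun y => f x y ≤ z).sup id

theorem le_rightResidual_iff {f : M → M → M} (mono : ∀ x, Monotone (f x))
    (map_bot : ∀ x, f x ⊥ = ⊥) (x y z : M) : y ≤ rightResidual f x z ↔ f x y ≤ z := by
  constructor
  · intro h
    have bot_mem : ⊥ ∈ Finset.univ.filter fun y => f x y ≤ z :=
      Finset.mem_filter.2 ⟨Finset.mem_univ _, (map_bot x).trans_le bot_le⟩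
    obtain ⟨w, hw, hsup⟩ := Finset.exists_mem_eq_sup _ ⟨⊥, bot_mem⟩ (id : M → M)
    rw [rightResidual, hsup] at h
    exact (mono x h).trans (Finset.mem_filter.1 hw).2
  · intro h
    exact Finset.le_sup (f := id) (by simpa using h)

end Residual

namespace WcmWitness

def mul : Fin 4 → Fin 4 → Fin 4 :=
  ![![0, 0, 0, 0], ![0, 1, 1, 1], ![0, 1, 2, 3], ![0, 3, 3, 3]]

theorem mul_assoc (x y z : Fin 4) : mul (mul x y) z = mul x (mul y z) := by
  revert x y z; decide

theorem unit_mul (x : Fin 4) : mul 2 x = x := by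
  revert x; decide

theorem mul_unit (x : Fin 4) : mul x 2 = x := by
  revert x; decide

theorem mul_monotone_right (x : Fin 4) : Monotone (mul x) := by
  revert x; decide

theorem mul_monotone_left (y : Fin 4) : Monotone (mul · y) := by
  revert y; decide

theorem mul_bot (x : Fin 4) : mul x ⊥ = ⊥ := by
  revert x; decide

theorem bot_mul (y : Fin 4) : mul ⊥ y = ⊥ := by
  revert y; decide

theorem residuated_right (x y z : Fin 4) : mul x y ≤ z ↔ y ≤ rightResidual mul x z :=
  (le_rightResidual_iff mul_monotone_right mul_bot x y z).symm

theorem residuated_left (x y z : Fin 4) : mul x y ≤ z ↔ x ≤ rightResidual (flip mul) y z :=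
  (le_rightResidual_iff mul_monotone_left bot_mul y x z).symm

/-- `3 ⊙ 1 = 3 > 2` leaves only `0` below `3 → 2`, whereas `1 ⊙ 3 = 1 ≤ 2` puts `1` below
`3 ⇝ 2`. -/
theorem rightResidual_lt_leftResidual : rightResidual mul 3 2 < rightResidual (flip mul) 3 2 := by
  decide

end WcmWitness

open WcmWitness in
theorem wcm_not_derivable :
    ∃ (M : Type) (_ : LinearOrder M) (odot : M → M → M) (t : M)
      (imp limp : M → M → M) (bot top : M),
      (∀ x, bot ≤ x) ∧ (∀ x, x ≤ top) ∧
      (∀ x y z, odot (odot x y) z = odot x (odot y z)) ∧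
      (∀ x, odot t x = x) ∧ (∀ x, odot x t = x) ∧
      (∀ x y z, odot x y ≤ z ↔ y ≤ imp x z) ∧
      (∀ x y z, odot x y ≤ z ↔ x ≤ limp y z) ∧
      ∃ a : M, ¬ t ≤ imp (limp a t) (imp a t) := by
  refine ⟨Fin 4, inferInstance, mul, 2, rightResidual mul, rightResidual (flip mul), ⊥, ⊤,
    fun _ => bot_le, fun _ => le_top, mul_assoc, unit_mul, mul_unit,
    residuated_right, residuated_left, 3, ?_⟩
  rw [unit_le_imp_iff mul_unit residuated_right, not_le]
  exact rightResidual_lt_leftResidual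
end
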